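/- Let λ ≤ κ be infinite cardinals with λ regular, let H̄ be a κ-monoid and H ⊆ H̄ a λ⁻-submonoid such that H̄ is λ⁻-braided over H. Then for every λ⁻-homomorphism φ : H → K into a κ-monoid K, there exists a unique κ-homomorphism φ̄ : H̄ → K extending φ. -/

import Mathlib

open scoped Classical

universe u v w

/-- A κ-monoid (Definition 2.1 of the paper), with the index cardinal κ modelled
by an (infinite) index type `ι`.  `base` plays the role of the element `0 ∈ κ`. -/
structure KappaMonoid (ι : Type u) (H : Type v) where
  zero : H
  base : ι
  sum : (ι → H) → H
  /-- (A1) -/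
  sum_single : ∀ x : ι → H, (∀ i, i ≠ base → x i = zero) → sum x = x base
  /-- (A2) -/
  sum_flatten : ∀ (x : ι × ι → H) (π : ι × ι ≃ ι),
    sum (fun i => sum fun j => x (i, j)) = sum fun k => x (π.symm k)

namespace KappaMonoid

variable {ι : Type u} {H : Type v}

/-- The family with value `a` at `i`, `b` at `j`, and `0` elsewhere. -/
noncomputable def pairFam (M : KappaMonoid ι H) (i j : ι) (a b : H) : ι → H :=
  fun k => if k = i then a else if k = j then b else M.zero

/-- The induced binary addition `a + b` on a κ-monoid. -/
noncomputable def add [Nontrivial ι] (M : KappaMonoid ι H) (a b : H) : H :=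
  M.sum (M.pairFam M.base (Classical.choose (exists_ne M.base)) a b)

/-- `α·a`, where the cardinal `α` is realized as the cardinality of `s ⊆ ι`:
the κ-sum of the family equal to `a` on `s` and `0` elsewhere. -/
noncomputable def smulSet (M : KappaMonoid ι H) (s : Set ι) (a : H) : H :=
  M.sum fun i => if i ∈ s then a else M.zero

/-- The κ-sum of the subfamily of `x` supported on `s` (padding by `0`). -/
noncomputable def sumOn (M : KappaMonoid ι H) (s : Set ι) (x : ι → H) : H :=
  M.sum fun i => if i ∈ s then x i else M.zero

end KappaMonoid
/-- A limit element of the well-order (the minimum counts as a limit element). -/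
def IsLimitElt {ι : Type u} [Preorder ι] [SuccOrder ι] (μ : ι) : Prop :=
  ¬ ∃ ν, ν < μ ∧ Order.succ ν = μ

/-- An indexed partition of the index set `ι` (blocks may be empty). -/
def IsIndexedPartition {ι : Type u} (I : ι → Set ι) : Prop :=
  (∀ μ ν, μ ≠ ν → Disjoint (I μ) (I ν)) ∧ (⋃ μ, I μ) = Set.univ

namespace KappaMonoid
variable {ι : Type u} {H : Type v}

/-- Definition 3.1(1): the families `x` and `y`, with entries in the λ⁻-submonoid
`X ⊆ H`, are λ⁻-braided: there are indexed partitions `(I_μ)`, `(J_μ)` of `ι` with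
blocks of cardinality `< λ` and braiding families `(u_μ)`, `(v_μ)` in `X` with
`v_μ = 0` at limit elements, such that `Σ_{i∈I_μ} x_i = v_μ + u_μ` and
`Σ_{j∈J_μ} y_j = v_{μ+1} + u_μ` for all `μ`. -/
noncomputable def Braided [Infinite ι] [LinearOrder ι] [SuccOrder ι]
    (M : KappaMonoid ι H) (lam : Cardinal.{u}) (X : Set H) (x y : ι → H) : Prop :=
  ∃ (I J : ι → Set ι) (u v : ι → H),
    IsIndexedPartition I ∧ IsIndexedPartition J ∧
    (∀ μ, Cardinal.mk (I μ) < lam) ∧ (∀ μ, Cardinal.mk (J μ) < lam) ∧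
    (∀ μ, u μ ∈ X) ∧ (∀ μ, v μ ∈ X) ∧
    (∀ μ, IsLimitElt μ → v μ = M.zero) ∧
    (∀ μ, M.sumOn (I μ) x = M.add (v μ) (u μ)) ∧
    (∀ μ, M.sumOn (J μ) y = M.add (v (Order.succ μ)) (u μ))

/-- `X` is a λ⁻-submonoid of the κ-monoid `H`: it contains `0` and is closed under
sums of families with support of cardinality `< λ`. -/
def IsSubmonoidLT (M : KappaMonoid ι H) (lam : Cardinal.{u}) (X : Set H) : Prop :=
  M.zero ∈ X ∧ ∀ x : ι → H, (∀ i, x i ∈ X) →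
    Cardinal.mk {i | x i ≠ M.zero} < lam → M.sum x ∈ X

/-- Definition 3.1(2): the κ-monoid `H` is λ⁻-braided over `X`: `X` generates `H`
as a κ-monoid, and any two κ-indexed families in `X` with equal κ-sums are
λ⁻-braided. -/
noncomputable def BraidedOver [Infinite ι] [LinearOrder ι] [SuccOrder ι]
    (M : KappaMonoid ι H) (lam : Cardinal.{u}) (X : Set H) : Prop :=
  (∀ h : H, ∃ x : ι → H, (∀ i, x i ∈ X) ∧ M.sum x = h) ∧
  ∀ x y : ι → H, (∀ i, x i ∈ X) → (∀ i, y i ∈ X) →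
    M.sum x = M.sum y → M.Braided lam X x y

end KappaMonoid
/-- A κ-homomorphism: a map preserving the neutral element and κ-indexed sums. -/
def IsKappaHom {ι : Type u} {H : Type v} {K : Type w}
    (M : KappaMonoid ι H) (N : KappaMonoid ι K) (φ : H → K) : Prop :=
  φ M.zero = N.zero ∧ ∀ x : ι → H, φ (M.sum x) = N.sum fun i => φ (x i)

/-- A λ⁻-homomorphism on the λ⁻-submonoid `X`: it preserves `0` and all sums of
families in `X` with support of cardinality `< λ`. -/
def IsLTHomOn {ι : Type u} {H : Type v} {K : Type w}
    (M : KappaMonoid ι H) (N : KappaMonoid ι K) (lam : Cardinal.{u}) (X : Set H)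
    (φ : H → K) : Prop :=
  φ M.zero = N.zero ∧ ∀ x : ι → H, (∀ i, x i ∈ X) →
    Cardinal.mk {i | x i ≠ M.zero} < lam → φ (M.sum x) = N.sum fun i => φ (x i)

/-!
Every element of `H̄` is a κ-sum of elements of `X`, so an extension must send `Σ xᵢ` to
`Σ φ(xᵢ)`; this gives uniqueness, and existence amounts to well-definedness. If two families
in `X` have the same sum they are braided. Since `φ` commutes with the small block sums, the
two `φ`-sums become `Σ_μ (φ v_μ + φ u_μ)` and `Σ_μ (φ v_{μ+1} + φ u_μ)`, and these agree
because `v` vanishes off the successors, so `μ ↦ μ + 1` only reindexes the nonzero terms.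
All rearrangements of κ-sums come from (A2): an injection between supports in `ι × ι` with
equinumerous complements extends to a permutation of `ι × ι`.
-/

open Cardinal

theorem Cardinal.nonempty_prod_self_equiv (ι : Type u) [Infinite ι] : Nonempty (ι × ι ≃ ι) :=
  Cardinal.eq.1 <| by simp [Cardinal.mul_eq_self (Cardinal.aleph0_le_mk ι)]

theorem Cardinal.mk_subset_prod_self_eq {ι : Type u} [Infinite ι] {S : Set (ι × ι)}
    (g : ι → ι × ι) (hg : Function.Injective g) (hgS : ∀ i, g i ∈ S) : #S = #ι := by
  obtain ⟨p⟩ := Cardinal.nonempty_prod_self_equiv ι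
  exact le_antisymm ((Cardinal.mk_set_le S).trans_eq (Cardinal.mk_congr p))
    (Cardinal.mk_le_of_injective (f := fun i => (⟨g i, hgS i⟩ : S))
      fun i j h => hg (congrArg Subtype.val h))

namespace KappaMonoid

variable {ι : Type u} {H : Type v} (M : KappaMonoid ι H)

theorem sum_congr {x y : ι → H} (h : ∀ i, x i = y i) : M.sum x = M.sum y :=
  congrArg M.sum (funext h)

theorem sum_const_zero : (M.sum fun _ => M.zero) = M.zero :=
  M.sum_single _ fun _ _ => rfl

theorem sum_eq_sum_sum_ite_base (x : ι → H) :
    M.sum x = M.sum fun i => M.sum fun j => if i = M.base then x j else M.zero := by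
  refine ((M.sum_single _ fun i hi => ?_).trans ?_).symm
  · simp only [hi, if_false, sum_const_zero]
  · simp only [if_true]

variable [Infinite ι]

theorem sum_sum_comp_equiv (z : ι × ι → H) (σ : ι × ι ≃ ι × ι) :
    (M.sum fun i => M.sum fun j => z (σ (i, j))) = M.sum fun i => M.sum fun j => z (i, j) := by
  obtain ⟨p⟩ := Cardinal.nonempty_prod_self_equiv ι
  rw [M.sum_flatten (fun q => z (σ q)) (σ.trans p), M.sum_flatten z p]
  simp

theorem sum_eq_of_forall_ne (i₀ : ι) {x : ι → H} (hx : ∀ i ≠ i₀, x i = M.zero) :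
    M.sum x = x i₀ := by
  let z : ι × ι → H := fun q => if q.1 = M.base then x q.2 else M.zero
  rw [M.sum_eq_sum_sum_ite_base x,
    ← M.sum_sum_comp_equiv z (Equiv.swap (M.base, M.base) (M.base, i₀)),
    M.sum_single _ fun i hi => ?_, M.sum_single _ fun j hj => ?_]
  · simp [z]
  · by_cases hj' : j = i₀
    · subst hj'
      simpa [z] using hx _ hj.symm
    · simp [z, Equiv.swap_apply_of_ne_of_ne, hj, hj', hx]
  · simp [z, Equiv.swap_apply_of_ne_of_ne, hi, sum_const_zero]

theorem sum_sum_eq_of_injOn {z z' : ι × ι → H} {A : Set (ι × ι)} {f : ι × ι → ι × ι}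
    (hf : A.InjOn f) (hA : #↥Aᶜ = #↥(f '' A)ᶜ) (hz : ∀ q ∉ A, z q = M.zero)
    (hz' : ∀ q ∉ f '' A, z' q = M.zero) (hzf : ∀ q ∈ A, z' (f q) = z q) :
    (M.sum fun i => M.sum fun j => z (i, j)) = M.sum fun i => M.sum fun j => z' (i, j) := by
  obtain ⟨σ, hσ⟩ := Cardinal.extend_function ⟨A.domRestrict f, hf.injective⟩
    (by rw [Function.Embedding.coeFn_mk, Set.range_domRestrict]; exact Cardinal.eq.1 hA)
  have hσA : ∀ q ∈ A, σ q = f q := fun q hq => hσ ⟨q, hq⟩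
  have hzσ : ∀ q, z' (σ q) = z q := by
    intro q
    by_cases hq : q ∈ A
    · rw [hσA q hq, hzf q hq]
    · refine (hz' _ ?_).trans (hz q hq).symm
      rintro ⟨q', hq', hfq'⟩
      rw [← hσA q' hq'] at hfq'
      exact hq (σ.injective hfq' ▸ hq')
  rw [← M.sum_sum_comp_equiv z' σ]
  simp only [hzσ]

theorem sum_sumOn_of_isIndexedPartition {I : ι → Set ι} (hI : IsIndexedPartition I)
    (x : ι → H) : (M.sum fun μ => M.sumOn (I μ) x) = M.sum x := by
  obtain ⟨hdisj, hcover⟩ := hI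
  have hmem : ∀ i, ∃ μ, i ∈ I μ := fun i => Set.mem_iUnion.1 (hcover ▸ Set.mem_univ i)
  have hnmem : ∀ i, ∃ μ, i ∉ I μ := fun i => by
    obtain ⟨μ, hμ⟩ := hmem i
    obtain ⟨ν, hν⟩ := exists_ne μ
    exact ⟨ν, fun h => Set.disjoint_left.1 (hdisj ν μ hν) h hμ⟩
  choose ν hν using hnmem
  obtain ⟨c, hc⟩ := exists_ne M.base
  have himage : (fun q : ι × ι => (M.base, q.2)) '' {q | q.2 ∈ I q.1} = {q | q.1 = M.base} := by
    ext ⟨μ, i⟩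
    constructor
    · rintro ⟨q, -, hq⟩
      exact congrArg Prod.fst hq.symm
    · rintro (rfl : μ = M.base)
      obtain ⟨μ', hμ'⟩ := hmem i
      exact ⟨(μ', i), hμ', rfl⟩
  rw [M.sum_eq_sum_sum_ite_base x]
  refine M.sum_sum_eq_of_injOn (z := fun q => if q.2 ∈ I q.1 then x q.2 else M.zero)
    (z' := fun q => if q.1 = M.base then x q.2 else M.zero) (A := {q | q.2 ∈ I q.1})
    (f := fun q => (M.base, q.2)) ?_ ?_ ?_ ?_ ?_
  · rintro ⟨μ, i⟩ hi ⟨μ', i'⟩ hi' h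
    obtain rfl : i = i' := congrArg Prod.snd h
    by_contra hne
    exact Set.disjoint_left.1 (hdisj μ μ' fun h' => hne (h' ▸ rfl)) hi hi'
  · rw [himage, Cardinal.mk_subset_prod_self_eq (fun i => (ν i, i))
        (fun i j h => congrArg Prod.snd h) hν,
      Cardinal.mk_subset_prod_self_eq (fun i => (c, i)) (fun i j h => congrArg Prod.snd h)
        fun _ => hc]
  · intro q hq
    exact if_neg hq
  · rintro ⟨μ, i⟩ hq
    rw [himage] at hq
    exact if_neg hq
  · intro q hq
    simp only [if_true]
    exact (if_pos hq).symm

theorem sum_sum_pairFam_succ [LinearOrder ι] [SuccOrder ι] [NoMaxOrder ι] {s t : ι}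
    (hst : s ≠ t) (v u : ι → H) (hv : ∀ ν ∉ Set.range Order.succ, v ν = M.zero) :
    (M.sum fun μ => M.sum (M.pairFam s t (v (Order.succ μ)) (u μ))) =
      M.sum fun μ => M.sum (M.pairFam s t (v μ) (u μ)) := by
  obtain ⟨r, hr⟩ := (Set.toFinite ({s, t} : Set ι)).infinite_compl.nonempty
  simp only [Set.mem_compl_iff, Set.mem_insert_iff, Set.mem_singleton_iff, not_or] at hr
  let f : ι × ι → ι × ι := fun q => (if q.2 = s then Order.succ q.1 else q.1, q.2)
  have hf : f.Injective := by
    rintro ⟨μ, i⟩ ⟨μ', i'⟩ h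
    obtain rfl : i = i' := congrArg Prod.snd h
    have h1 := congrArg Prod.fst h
    by_cases hi : i = s
    · simp only [f, hi, if_true] at h1
      rw [Order.succ_injective h1]
    · simp only [f, hi, if_false] at h1
      rw [h1]
  have hr_compl : ∀ {A : Set (ι × ι)}, (∀ q ∈ A, q.2 = s ∨ q.2 = t) → ∀ μ, (μ, r) ∈ Aᶜ :=
    fun hA μ h => (hA _ h).elim hr.1 hr.2
  refine M.sum_sum_eq_of_injOn (z := fun q => M.pairFam s t (v (Order.succ q.1)) (u q.1) q.2)
    (z' := fun q => M.pairFam s t (v q.1) (u q.1) q.2) (A := {q | q.2 = s ∨ q.2 = t}) (f := f)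
    hf.injOn ?_ ?_ ?_ ?_
  · rw [Cardinal.mk_subset_prod_self_eq _ (fun i j h => congrArg Prod.fst h)
        (hr_compl (A := {q | q.2 = s ∨ q.2 = t}) fun q hq => hq),
      Cardinal.mk_subset_prod_self_eq _ (fun i j h => congrArg Prod.fst h)
        (hr_compl (by rintro _ ⟨q, hq, rfl⟩; exact hq))]
  · rintro ⟨μ, i⟩ hq
    simp_all [pairFam]
  · rintro ⟨ν, i⟩ hq
    by_cases his : i = s
    · subst his
      simp only [pairFam, if_true]
      refine hv ν ?_
      rintro ⟨μ, rfl⟩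
      exact hq ⟨(μ, i), Or.inl rfl, by simp [f]⟩
    · by_cases hit : i = t
      · subst hit
        exact absurd ⟨(ν, i), Or.inr rfl, by simp [f, his]⟩ hq
      · simp [pairFam, his, hit]
  · rintro ⟨μ, i⟩ (rfl | rfl)
    · simp [f, pairFam]
    · simp [f, pairFam, hst.symm]

end KappaMonoid

namespace IsLTHomOn

variable {ι : Type u} {H : Type v} {K : Type w} {M : KappaMonoid ι H} {N : KappaMonoid ι K}
  {lam : Cardinal.{u}} {X : Set H} {φ : H → K}

theorem map_sum_of_support_subset (hφ : IsLTHomOn M N lam X φ) (hX : M.zero ∈ X) {S : Set ι}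
    (hS : #S < lam) {x : ι → H} (hxX : ∀ i ∈ S, x i ∈ X) (hx : ∀ i ∉ S, x i = M.zero) :
    φ (M.sum x) = N.sum fun i => φ (x i) := by
  refine hφ.2 x (fun i => ?_) ((Cardinal.mk_le_mk_of_subset fun i hi => ?_).trans_lt hS)
  · by_cases hi : i ∈ S
    · exact hxX i hi
    · exact hx i hi ▸ hX
  · by_contra h
    exact hi (hx i h)

theorem map_sumOn (hφ : IsLTHomOn M N lam X φ) (hX : M.zero ∈ X) {S : Set ι} (hS : #S < lam)
    {x : ι → H} (hxX : ∀ i, x i ∈ X) : φ (M.sumOn S x) = N.sumOn S fun i => φ (x i) := by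
  refine (hφ.map_sum_of_support_subset hX hS (fun i hi => ?_) fun i hi => ?_).trans
    (N.sum_congr fun i => ?_)
  · simpa only [hi, if_true] using hxX i
  · exact if_neg hi
  · rw [apply_ite φ, hφ.1]

theorem map_sum_pairFam (hφ : IsLTHomOn M N lam X φ) (hX : M.zero ∈ X) (hlam : ℵ₀ ≤ lam)
    (s t : ι) {a b : H} (ha : a ∈ X) (hb : b ∈ X) :
    φ (M.sum (M.pairFam s t a b)) = N.sum (N.pairFam s t (φ a) (φ b)) := by
  refine (hφ.map_sum_of_support_subset hX (S := {s, t})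
    ((Set.toFinite _).lt_aleph0.trans_le hlam) (fun i _ => ?_) fun i hi => ?_).trans
    (N.sum_congr fun i => ?_)
  · unfold KappaMonoid.pairFam
    split_ifs <;> assumption
  · simp only [Set.mem_insert_iff, Set.mem_singleton_iff, not_or] at hi
    simp [KappaMonoid.pairFam, hi.1, hi.2]
  · simp only [KappaMonoid.pairFam, apply_ite φ, hφ.1]

theorem sum_comp_eq_of_braided [Infinite ι] [LinearOrder ι] [SuccOrder ι] [NoMaxOrder ι]
    (hφ : IsLTHomOn M N lam X φ) (hX : M.zero ∈ X) (hlam : ℵ₀ ≤ lam) {x y : ι → H}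
    (hx : ∀ i, x i ∈ X) (hy : ∀ i, y i ∈ X) (hxy : M.Braided lam X x y) :
    (N.sum fun i => φ (x i)) = N.sum fun i => φ (y i) := by
  obtain ⟨I, J, u, v, hI, hJ, hIcard, hJcard, hu, hv, hvlim, hxI, hyJ⟩ := hxy
  set c := Classical.choose (exists_ne M.base)
  have hc : M.base ≠ c := (Classical.choose_spec (exists_ne M.base)).symm
  have hφv : ∀ ν ∉ Set.range Order.succ, φ (v ν) = N.zero := fun ν hν => by
    rw [hvlim ν fun ⟨μ, _, hμ⟩ => hν ⟨μ, hμ⟩, hφ.1]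
  calc (N.sum fun i => φ (x i))
      = N.sum fun μ => N.sumOn (I μ) fun i => φ (x i) :=
        (N.sum_sumOn_of_isIndexedPartition hI _).symm
    _ = N.sum fun μ => N.sum (N.pairFam M.base c (φ (v μ)) (φ (u μ))) := N.sum_congr fun μ => by
        rw [← hφ.map_sumOn hX (hIcard μ) hx, hxI μ, KappaMonoid.add,
          hφ.map_sum_pairFam hX hlam _ _ (hv μ) (hu μ)]
    _ = N.sum fun μ => N.sum (N.pairFam M.base c (φ (v (Order.succ μ))) (φ (u μ))) :=
        (N.sum_sum_pairFam_succ hc _ _ hφv).symm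
    _ = N.sum fun μ => N.sumOn (J μ) fun i => φ (y i) := N.sum_congr fun μ => by
        rw [← hφ.map_sumOn hX (hJcard μ) hy, hyJ μ, KappaMonoid.add,
          hφ.map_sum_pairFam hX hlam _ _ (hv _) (hu μ)]
    _ = N.sum fun i => φ (y i) := N.sum_sumOn_of_isIndexedPartition hJ _

end IsLTHomOn

theorem braidedOver_extend_hom_general {ι : Type u} {H : Type v} {K : Type w} [Infinite ι]
    [LinearOrder ι] [SuccOrder ι] [NoMaxOrder ι]
    (M : KappaMonoid ι H) (lam : Cardinal.{u}) (hreg : lam.IsRegular)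
    (X : Set H) (hX : M.IsSubmonoidLT lam X) (hbo : M.BraidedOver lam X)
    (N : KappaMonoid ι K) (φ : H → K) (hφ : IsLTHomOn M N lam X φ) :
    ∃! ψ : H → K, IsKappaHom M N ψ ∧ ∀ h ∈ X, ψ h = φ h := by
  obtain ⟨hgen, hbraid⟩ := hbo
  choose rep hrepX hrep using hgen
  have hwd : ∀ x y : ι → H, (∀ i, x i ∈ X) → (∀ i, y i ∈ X) → M.sum x = M.sum y →
      (N.sum fun i => φ (x i)) = N.sum fun i => φ (y i) := fun x y hx hy hxy =>
    hφ.sum_comp_eq_of_braided hX.1 hreg.aleph0_le hx hy (hbraid x y hx hy hxy)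
  have hext : ∀ h ∈ X, (N.sum fun i => φ (rep h i)) = φ h := fun h hh => by
    let e : ι → H := fun i => if i = M.base then h else M.zero
    have he : M.sum e = h := (M.sum_single e fun i hi => if_neg hi).trans (if_pos rfl)
    have heX : ∀ i, e i ∈ X := fun i => by
      dsimp only [e]
      split_ifs
      exacts [hh, hX.1]
    rw [hwd (rep h) e (hrepX h) heX ((hrep h).trans he.symm),
      N.sum_eq_of_forall_ne M.base fun i hi => by simp only [e, if_neg hi, hφ.1]]
    simp only [e, if_true]
  refine ⟨fun h => N.sum fun i => φ (rep h i), ⟨⟨(hext _ hX.1).trans hφ.1, fun x => ?_⟩, hext⟩,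
    fun ψ ⟨hψ, hψφ⟩ => funext fun h => ?_⟩
  · obtain ⟨p⟩ := Cardinal.nonempty_prod_self_equiv ι
    have hflat := M.sum_flatten (fun q => rep (x q.1) q.2) p
    simp only [hrep] at hflat
    exact (hwd _ _ (hrepX _) (fun k => hrepX _ _) ((hrep _).trans hflat)).trans
      (N.sum_flatten (fun q => φ (rep (x q.1) q.2)) p).symm
  · calc ψ h = ψ (M.sum (rep h)) := congrArg ψ (hrep h).symm
      _ = N.sum fun i => φ (rep h i) := (hψ.2 _).trans (N.sum_congr fun i => hψφ _ (hrepX h i))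

/-- Proposition 3.9: if the κ-monoid `H̄` is λ⁻-braided over the λ⁻-submonoid `X`,
then every λ⁻-homomorphism `φ` from `X` into a κ-monoid `K` extends uniquely to a
κ-homomorphism `H̄ → K`. -/
theorem braidedOver_extend_hom {ι : Type u} {H : Type v} {K : Type w} [Infinite ι]
    [LinearOrder ι] [SuccOrder ι] [NoMaxOrder ι] [WellFoundedLT ι]
    (M : KappaMonoid ι H) (lam : Cardinal.{u}) (hreg : lam.IsRegular)
    (hlam : lam ≤ Cardinal.mk ι)
    (X : Set H) (hX : M.IsSubmonoidLT lam X) (hbo : M.BraidedOver lam X)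
    (N : KappaMonoid ι K) (φ : H → K) (hφ : IsLTHomOn M N lam X φ) :
    ∃! ψ : H → K, IsKappaHom M N ψ ∧ ∀ h ∈ X, ψ h = φ h :=
  braidedOver_extend_hom_general M lam hreg X hX hbo N φ hφ
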